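/- arXiv:2012.04219 — 4 statements merged into one kernel-verified Lean document; each statement's English description precedes it below -/
import Mathlib

section
/- Let K be a field with a valuation v : K → ℤₘ₀. Let d ∈ K satisfy v d = 1 and suppose that the residue of d is not a square in the residue field of the valuation ring of v. Let π ∈ K be a uniformizer (v π = Multiplicative.ofAdd (−1) viewed in ℤₘ₀). Then the quaternion algebra ℍ[K, d, π] is a division ring: every nonzero element of ℍ[K, d, π] is a unit. -/
/-!
The reduced norm of `x = (a + b i) + (c + e i) j` is `N(a, b) - π N(c, e)` with
`N(a, b) = a² - d b²`. When `v a = v b`, the factor `(a / b)² - d` of `N(a, b)` is a unit because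
the residue of `d` is not a square, so in all cases `v N(a, b) = max (v a) (v b) ^ 2` has even
additive valuation, whereas that of `π N(c, e)` is odd. The two terms can therefore only cancel
when both vanish, i.e. when `x = 0`; otherwise `x⁻¹ = (x x̄)⁻¹ x̄`.
-/

open scoped Quaternion

local notation "ℤₘ₀" => WithZero (Multiplicative ℤ)

namespace QuaternionAlgebra

variable {K : Type*}

theorem re_mul_star [CommRing K] {c₁ c₂ : K} (x : ℍ[K, c₁, c₂]) :
    (x * star x).re = x.re ^ 2 - c₁ * x.imI ^ 2 - c₂ * (x.imJ ^ 2 - c₁ * x.imK ^ 2) := by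
  simp only [re_mul, re_star, imI_star, imJ_star, imK_star]
  ring

theorem isUnit_of_re_mul_star_ne_zero [Field K] {c₁ c₂ c₃ : K} {x : ℍ[K, c₁, c₂, c₃]}
    (h : (x * star x).re ≠ 0) : IsUnit x := by
  set N := (x * star x).re
  have hN : x * star x = N := mul_star_eq_coe x
  refine ⟨⟨x, N⁻¹ • star x, ?_, ?_⟩, rfl⟩
  · rw [Algebra.mul_smul_comm, hN, smul_coe, inv_mul_cancel₀ h, coe_one]
  · rw [Algebra.smul_mul_assoc, star_comm_self', hN, smul_coe, inv_mul_cancel₀ h, coe_one]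

end QuaternionAlgebra

namespace Valuation

variable {K Γ : Type*} [Field K] [LinearOrderedCommGroupWithZero Γ] (v : Valuation K Γ)

theorem map_eq_one_of_residue_ne_zero {x : v.valuationSubring}
    (hx : IsLocalRing.residue v.valuationSubring x ≠ 0) : v x = 1 :=
  (valuationSubring.integers v).one_of_isUnit ((IsLocalRing.residue_ne_zero_iff_isUnit x).mp hx)

theorem map_sq_sub_eq_one {d : v.valuationSubring}
    (hd : ¬IsSquare (IsLocalRing.residue v.valuationSubring d)) (t : v.valuationSubring) :
    v ((t : K) ^ 2 - d) = 1 := by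
  refine v.map_eq_one_of_residue_ne_zero (x := t ^ 2 - d) fun h => hd ?_
  rw [_root_.map_sub, map_pow, sub_eq_zero] at h
  exact ⟨_, h ▸ sq _⟩

theorem map_sq_sub_mul_sq {d : v.valuationSubring}
    (hd : ¬IsSquare (IsLocalRing.residue v.valuationSubring d)) (a b : K) :
    v (a ^ 2 - d * b ^ 2) = max (v a) (v b) ^ 2 := by
  have hvd : v d = 1 := by simpa using v.map_sq_sub_eq_one hd 0
  rcases lt_trichotomy (v a) (v b) with hab | hab | hab
  · have : v (a ^ 2) < v (d * b ^ 2) := by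
      simpa [hvd] using pow_lt_pow_left₀ hab zero_le two_ne_zero
    rw [map_sub_eq_of_lt_right _ this, max_eq_right hab.le, map_mul, hvd, one_mul, map_pow]
  · rcases eq_or_ne b 0 with rfl | hb
    · obtain rfl : a = 0 := by simpa using hab
      simp
    have hvt : v (a / b) = 1 := by rw [map_div₀, hab, div_self (by simpa using hb)]
    have hfactor : a ^ 2 - d * b ^ 2 = b ^ 2 * ((a / b) ^ 2 - d) := by field_simp
    rw [hfactor, map_mul, v.map_sq_sub_eq_one hd ⟨a / b, hvt.le⟩, hab, max_self, map_pow, mul_one]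
  · have : v (d * b ^ 2) < v (a ^ 2) := by
      simpa [hvd] using pow_lt_pow_left₀ hab zero_le two_ne_zero
    rw [map_sub_eq_of_lt_left _ this, max_eq_left hab.le, map_pow]

end Valuation

namespace WithZero

theorem eq_zero_of_sq_eq_exp_mul_sq {n : ℤ} (hn : Odd n) {α β : ℤₘ₀}
    (h : α ^ 2 = exp n * β ^ 2) : α = 0 ∧ β = 0 := by
  by_cases hβ : β = 0
  · simpa [hβ] using h
  have hα : α ≠ 0 := by
    rintro rfl
    simp [hβ] at h
  have hlog := congrArg log h
  rw [log_mul exp_ne_zero (pow_ne_zero 2 hβ), log_pow, log_pow, log_exp] at hlog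
  refine absurd ⟨log α - log β, ?_⟩ (Int.not_even_iff_odd.mpr hn)
  simp only [nsmul_eq_mul, Nat.cast_ofNat] at hlog
  omega

end WithZero

/-- Over a field `K` with a `ℤₘ₀`-valued valuation `v`, if `d` is a unit of the valuation
ring (`v d = 1`) whose residue is not a square in the residue field, and `π` is a
uniformizer (`v π = ofAdd (-1)`), then the quaternion algebra `ℍ[K, d, π]` is a division
ring: every nonzero element is a unit. -/
theorem quaternionAlgebra_isUnit_of_ne_zero
    (K : Type*) [Field K] (v : Valuation K ℤₘ₀) (d π : K)
    (hd : v d = 1)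
    (hd_res : ¬ IsSquare (IsLocalRing.residue v.valuationSubring
      ⟨d, (Valuation.mem_valuationSubring_iff v d).mpr hd.le⟩))
    (hπ : v π = (Multiplicative.ofAdd (-1 : ℤ) : Multiplicative ℤ)) :
    ∀ x : ℍ[K, d, π], x ≠ 0 → IsUnit x := by
  intro x hx
  refine QuaternionAlgebra.isUnit_of_re_mul_star_ne_zero fun hN => hx ?_
  rw [QuaternionAlgebra.re_mul_star, sub_eq_zero] at hN
  have hval := congrArg v hN
  rw [v.map_sq_sub_mul_sq hd_res, map_mul, hπ, v.map_sq_sub_mul_sq hd_res,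
    ← WithZero.exp_eq_coe_ofAdd] at hval
  obtain ⟨h₁, h₂⟩ := WithZero.eq_zero_of_sq_eq_exp_mul_sq (by decide) hval
  simp only [max_eq_zero, map_eq_zero] at h₁ h₂
  exact QuaternionAlgebra.ext h₁.1 h₁.2 h₂.1 h₂.2
end

section
/- Let K be a field with a valuation v : K → ℤₘ₀. Let d ∈ K satisfy v d = 1 and suppose that the residue of d is not a square in the residue field of the valuation ring of v. Then for all a, b ∈ K, the value v(a² − d·b²) is a square in ℤₘ₀; that is, there exists c ∈ ℤₘ₀ with v(a² − d·b²) = c·c (equivalently, the additive valuation of a² − d·b² is even or infinite). -/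
/-!
If `v a > v b`, the term `a²` strictly dominates `d b²`, so the value is `(v a)²`. Otherwise
`t = a / b` is integral and `a² - d b² = b² (t² - d)`; the value of `t² - d` cannot drop below
`1`, since then the residue of `d` would be the square of the residue of `t`.
-/

local notation "ℤₘ₀" => WithZero (Multiplicative ℤ)

open IsLocalRing

theorem Valuation.map_sq_sub_eq_one_of_not_isSquare_residue {K Γ₀ : Type*} [Field K]
    [LinearOrderedCommGroupWithZero Γ₀] (v : Valuation K Γ₀) {d t : K} (hd : v d = 1)
    (hd_res : ¬ IsSquare (residue v.valuationSubring
      ⟨d, (v.mem_valuationSubring_iff d).mpr hd.le⟩))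
    (ht : v t ≤ 1) : v (t ^ 2 - d) = 1 := by
  have ht2 : v (t ^ 2) ≤ 1 := by rw [map_pow]; exact pow_le_one₀ zero_le ht
  refine (v.map_sub_le ht2 hd.le).antisymm (not_lt.mp fun hlt => hd_res ?_)
  set T : v.valuationSubring := ⟨t, ht⟩
  have hmem : T ^ 2 - ⟨d, (v.mem_valuationSubring_iff d).mpr hd.le⟩ ∈
      maximalIdeal v.valuationSubring :=
    v.mem_maximalIdeal_iff.mpr hlt
  rw [← residue_eq_zero_iff, _root_.map_sub, map_pow, sub_eq_zero] at hmem
  exact ⟨residue _ T, by rw [← hmem, sq]⟩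

/-- Over a field `K` with a `ℤₘ₀`-valued valuation `v`, if `d` is a unit of the valuation
ring (`v d = 1`) whose residue is not a square in the residue field, then every norm
`a² - d·b²` from the quadratic extension `K(√d)` has square (i.e. even or infinite)
valuation: `v (a² - d·b²) = c·c` for some `c : ℤₘ₀`. -/
theorem valuation_norm_sq_sub_mul_sq
    (K : Type*) [Field K] (v : Valuation K ℤₘ₀) (d : K)
    (hd : v d = 1)
    (hd_res : ¬ IsSquare (IsLocalRing.residue v.valuationSubring
      ⟨d, (Valuation.mem_valuationSubring_iff v d).mpr hd.le⟩)) :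
    ∀ a b : K, ∃ c : ℤₘ₀, v (a ^ 2 - d * b ^ 2) = c * c := by
  intro a b
  rcases eq_or_ne b 0 with rfl | hb
  · exact ⟨v a, by simp [sq]⟩
  rcases le_or_gt (v a) (v b) with hab | hba
  · have ht : v (a / b) ≤ 1 := by
      rw [map_div₀]
      exact div_le_one_of_le₀ hab zero_le
    refine ⟨v b, ?_⟩
    calc v (a ^ 2 - d * b ^ 2) = v (b ^ 2 * ((a / b) ^ 2 - d)) := by
          congr 1
          field_simp
      _ = v b * v b := by
          rw [map_mul, v.map_sq_sub_eq_one_of_not_isSquare_residue hd hd_res ht, mul_one,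
            map_pow, sq]
  · have hlt : v (d * b ^ 2) < v (a ^ 2) := by
      simpa only [map_mul, map_pow, hd, one_mul] using pow_lt_pow_left₀ hba zero_le two_ne_zero
    exact ⟨v a, by rw [v.map_sub_eq_of_lt_left hlt, map_pow, sq]⟩
end

section
/- Let k be a field and let D, Ξ ∈ k[X] be polynomials with D ≠ 0. Suppose that D and its reverse D.reverse are coprime (IsCoprime D D.reverse in k[X]), and that Ξ * D.reverse = Ξ.reverse * D. Then there exists S ∈ k[X] such that Ξ = S * D and S.reverse = S (that is, S is self-reciprocal). -/
open Polynomial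

/-- If `D ≠ 0` is coprime to its reverse and `Ξ` satisfies the functional equation
`Ξ * D.reverse = Ξ.reverse * D`, then `Ξ = S * D` for some self-reciprocal polynomial
`S` (i.e. `S` is self-reciprocal). -/
theorem exists_selfReciprocal_factor_of_functional_equation
    (k : Type*) [Field k] (D Ξ : k[X]) (hD : D ≠ 0)
    (hcop : IsCoprime D D.reverse)
    (hfe : Ξ * D.reverse = Ξ.reverse * D) :
    ∃ S : k[X], Ξ = S * D ∧ S.reverse = S := by
  have hdvd : D ∣ Ξ := hcop.dvd_of_dvd_mul_right ⟨Ξ.reverse, by rw [hfe, mul_comm]⟩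
  obtain ⟨S, hS⟩ := hdvd
  refine ⟨S, by rw [hS, mul_comm], ?_⟩
  have hrev : Ξ.reverse = D.reverse * S.reverse := by
    rw [hS, reverse_mul_of_domain]
  have hDr : D.reverse ≠ 0 := fun h => hD (by simpa using congrArg reverse h)
  have : S * (D * D.reverse) = S.reverse * (D * D.reverse) := by
    have := hfe
    rw [hS, reverse_mul_of_domain] at this
    ring_nf at this ⊢
    linear_combination this
  have h := mul_right_cancel₀ (mul_ne_zero hD hDr) this
  exact h.symm
end

section
/- Let k be a field, V a vector space over k, and G a group acting on V by k-linear maps. Let Z : V → k be a k-linear functional that is G-invariant, i.e. Z(g • v) = Z(v) for all g ∈ G and v ∈ V. Assume that for every f ∈ V there exists w ∈ V with Z(w) ≠ 0 such that f lies in the k-linear span of the orbit {g • w : g ∈ G}. Then: (1) the kernel of Z equals the k-linear span of the set {v − g • v : v ∈ V, g ∈ G}; and (2) every G-invariant k-linear functional Z′ : V → k is a scalar multiple of Z, i.e. there exists c ∈ k with Z′ = c • Z. -/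
/-- Let `G` act `k`-linearly on a `k`-vector space `V`, and let `Z : V →ₗ[k] k` be a
`G`-invariant functional such that every `f ∈ V` lies in the span of the `G`-orbit of
some `w` with `Z w ≠ 0`. Then (1) `ker Z` is the span of the elements `v - g • v`, and
(2) every `G`-invariant functional `Z'` is a scalar multiple of `Z`. -/
theorem ker_eq_span_and_invariant_functional_unique
    (k V G : Type*) [Field k] [AddCommGroup V] [Module k V]
    [Group G] [DistribMulAction G V] [SMulCommClass G k V]
    (Z : V →ₗ[k] k) (hZ : ∀ (g : G) (x : V), Z (g • x) = Z x)
    (hspan : ∀ f : V, ∃ w : V, Z w ≠ 0 ∧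
      f ∈ Submodule.span k (Set.range fun g : G => g • w)) :
    LinearMap.ker Z = Submodule.span k {x : V | ∃ (y : V) (g : G), x = y - g • y} ∧
      ∀ Z' : V →ₗ[k] k, (∀ (g : G) (x : V), Z' (g • x) = Z' x) →
        ∃ c : k, Z' = c • Z := by
  set S := Submodule.span k {x : V | ∃ (y : V) (g : G), x = y - g • y} with hSdef
  have hmem : ∀ (y : V) (g : G), y - g • y ∈ S := fun y g =>
    Submodule.subset_span ⟨y, g, rfl⟩
  have hkey : ∀ (w : V), Z w ≠ 0 →
      ∀ f ∈ Submodule.span k (Set.range fun g : G => g • w),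
      f - (Z f / Z w) • w ∈ S := by
    intro w hw f hf
    induction hf using Submodule.span_induction with
    | mem x hx =>
      obtain ⟨g, rfl⟩ := hx
      rw [hZ, div_self hw, one_smul]
      simpa [neg_sub] using S.neg_mem (hmem w g)
    | zero => simp only [map_zero, zero_div, zero_smul, sub_zero]; exact S.zero_mem
    | add x y hx hy ihx ihy =>
      have h := S.add_mem ihx ihy
      convert h using 1
      rw [map_add, add_div, add_smul]
      abel
    | smul a x hx ih =>
      have h := S.smul_mem a ih
      convert h using 1
      rw [map_smul, smul_sub, smul_smul, smul_eq_mul, mul_div_assoc]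
  have hker : LinearMap.ker Z = S := by
    apply le_antisymm
    · intro f hf
      obtain ⟨w, hw, hfw⟩ := hspan f
      have := hkey w hw f hfw
      rwa [LinearMap.mem_ker.mp hf, zero_div, zero_smul, sub_zero] at this
    · rw [hSdef]
      apply Submodule.span_le.mpr
      rintro x ⟨y, g, rfl⟩
      simp [LinearMap.mem_ker, hZ]
  refine ⟨hker, fun Z' hZ' => ?_⟩
  obtain ⟨w₀, hw₀, -⟩ := hspan 0
  have hSker' : S ≤ LinearMap.ker Z' := by
    rw [hSdef]
    apply Submodule.span_le.mpr
    rintro x ⟨y, g, rfl⟩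
    simp [LinearMap.mem_ker, hZ']
  refine ⟨Z' w₀ / Z w₀, ?_⟩
  ext f
  have h1 : f - (Z f / Z w₀) • w₀ ∈ LinearMap.ker Z := by
    simp [LinearMap.mem_ker, div_mul_cancel₀ _ hw₀]
  have h2 : Z' (f - (Z f / Z w₀) • w₀) = 0 := hSker' (hker ▸ h1)
  rw [map_sub, map_smul, sub_eq_zero, smul_eq_mul] at h2
  rw [h2]
  simp [smul_eq_mul]
  ring
end
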